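/- Let H be a symmetric positive definite n×n real matrix, X an n×p real matrix of rank p, and L₁ (n×p) and L₂ (n×(n−p)) real matrices such that [L₁ L₂] is nonsingular, L₁ᵀX = I_p, and L₂ᵀX = 0. Then (XᵀH⁻¹X)⁻¹ = L₁ᵀHL₁ − L₁ᵀHL₂(L₂ᵀHL₂)⁻¹L₂ᵀHL₁. -/

import Mathlib

/-!
Put `L = [L₁ L₂]` and `M = L⁻¹`. The conditions `L₁ᵀX = I`, `L₂ᵀX = 0` say `XᵀL = [I 0]`, so `Xᵀ`
is the first block row of `M`. The matrix `LᵀHL` has inverse `MH⁻¹Mᵀ`, whose top-left block is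
therefore `XᵀH⁻¹X`. By the block inversion formula that block is the inverse of the Schur
complement of the bottom-right block `L₂ᵀHL₂` of `LᵀHL`, which is invertible because it is
positive definite (`L₂` has a left inverse, so it is injective).
-/

open Matrix

namespace Matrix

variable {α : Type*} [CommRing α] {k l m n : Type*}

theorem fromRows_mul_mul_transpose_fromRows [Fintype l] (A₁ : Matrix m l α)
    (A₂ : Matrix n l α) (H : Matrix l l α) :
    fromRows A₁ A₂ * H * (fromRows A₁ A₂)ᵀ =
      fromBlocks (A₁ * H * A₁ᵀ) (A₁ * H * A₂ᵀ) (A₂ * H * A₁ᵀ) (A₂ * H * A₂ᵀ) := by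
  rw [transpose_fromRows, fromRows_mul, fromRows_mul_fromCols]

theorem transpose_mul_mul_mul_inv_mul_transpose_eq_one [Fintype k] [Fintype l] [DecidableEq k]
    [DecidableEq l] {L : Matrix l k α} {M : Matrix k l α} {H : Matrix l l α} (hLM : L * M = 1)
    (hML : M * L = 1) (hH : IsUnit H.det) :
    Lᵀ * H * L * (M * H⁻¹ * Mᵀ) = 1 := by
  calc Lᵀ * H * L * (M * H⁻¹ * Mᵀ) = Lᵀ * (H * (L * M) * H⁻¹) * Mᵀ := by
        simp only [Matrix.mul_assoc]
    _ = (M * L)ᵀ := by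
        rw [hLM, Matrix.mul_one, mul_nonsing_inv _ hH, Matrix.mul_one, transpose_mul]
    _ = 1 := by rw [hML, transpose_one]

/-- The top-left block of the inverse of a block matrix is the inverse of the Schur complement
of its bottom-right block. -/
theorem sub_mul_inv_mul_mul_eq_one_of_fromBlocks_mul_eq_one [Fintype m] [Fintype n]
    [DecidableEq m] [DecidableEq n] {A : Matrix m m α} {B : Matrix m n α} {C : Matrix n m α}
    {D : Matrix n n α} {E : Matrix m m α} {F : Matrix m n α} {G : Matrix n m α}
    {K : Matrix n n α} (h : fromBlocks A B C D * fromBlocks E F G K = 1) (hD : IsUnit D.det) :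
    (A - B * D⁻¹ * C) * E = 1 := by
  rw [fromBlocks_multiply, ← fromBlocks_one, fromBlocks_inj] at h
  obtain ⟨h₁₁, -, h₂₁, -⟩ := h
  have hCE : C * E = -(D * G) := eq_neg_of_add_eq_zero_left h₂₁
  calc (A - B * D⁻¹ * C) * E = A * E - B * (D⁻¹ * (C * E)) := by
        simp only [Matrix.sub_mul, Matrix.mul_assoc]
    _ = A * E + B * G := by
        rw [hCE, Matrix.mul_neg, ← Matrix.mul_assoc D⁻¹, nonsing_inv_mul _ hD, Matrix.one_mul,
          Matrix.mul_neg, sub_neg_eq_add]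
    _ = 1 := h₁₁

theorem eq_transpose_toRows₁_of_fromCols_mul_eq_one [Fintype l] [Fintype m] [Fintype n]
    [DecidableEq l] [DecidableEq m] {X L₁ : Matrix l m α} {L₂ : Matrix l n α}
    {M : Matrix (m ⊕ n) l α} (hLM : fromCols L₁ L₂ * M = 1) (h₁ : L₁ᵀ * X = 1)
    (h₂ : L₂ᵀ * X = 0) : X = M.toRows₁ᵀ := by
  have hXL : Xᵀ * fromCols L₁ L₂ = fromCols 1 0 := by
    rw [mul_fromCols, ← transpose_transpose L₁, ← transpose_transpose L₂, ← transpose_mul,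
      ← transpose_mul, h₁, h₂, transpose_one, transpose_zero]
  calc X = (Xᵀ * (fromCols L₁ L₂ * M))ᵀ := by rw [hLM, Matrix.mul_one, transpose_transpose]
    _ = M.toRows₁ᵀ := by
        rw [← Matrix.mul_assoc, hXL, ← fromRows_toRows M, fromCols_mul_fromRows,
          Matrix.one_mul, Matrix.zero_mul, add_zero, toRows₁_fromRows]

theorem toRows₂_mul_eq_one_of_mul_fromCols_eq_one [Fintype l] [DecidableEq m] [DecidableEq n]
    {L₁ : Matrix l m α} {L₂ : Matrix l n α} {M : Matrix (m ⊕ n) l α}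
    (hML : M * fromCols L₁ L₂ = 1) : M.toRows₂ * L₂ = 1 := by
  rw [← fromRows_toRows M, fromRows_mul_fromCols, ← fromBlocks_one, fromBlocks_inj] at hML
  exact hML.2.2.2

theorem mulVec_injective_of_mul_eq_one [Fintype l] [Fintype n] [DecidableEq n]
    {A : Matrix l n α} {B : Matrix n l α} (h : B * A = 1) : Function.Injective A.mulVec :=
  fun v w hvw => by simpa [mulVec_mulVec, h] using congrArg (B *ᵥ ·) hvw

end Matrix

theorem stmt_16_general {n p : ℕ} (H : Matrix (Fin n) (Fin n) ℝ)
    (X : Matrix (Fin n) (Fin p) ℝ)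
    (L₁ : Matrix (Fin n) (Fin p) ℝ) (L₂ : Matrix (Fin n) (Fin (n - p)) ℝ)
    (hH : H.PosDef)
    (hL : ∃ M : Matrix (Fin p ⊕ Fin (n - p)) (Fin n) ℝ,
      Matrix.fromCols L₁ L₂ * M = 1 ∧ M * Matrix.fromCols L₁ L₂ = 1)
    (hL₁X : L₁ᵀ * X = 1) (hL₂X : L₂ᵀ * X = 0) :
    (Xᵀ * H⁻¹ * X)⁻¹ = L₁ᵀ * H * L₁ - L₁ᵀ * H * L₂ * (L₂ᵀ * H * L₂)⁻¹ * L₂ᵀ * H * L₁ := by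
  obtain ⟨M, hLM, hML⟩ := hL
  have hD : (L₂ᵀ * H * L₂).PosDef := by
    simpa only [conjTranspose_eq_transpose_of_trivial] using hH.conjTranspose_mul_mul_same
      (mulVec_injective_of_mul_eq_one (toRows₂_mul_eq_one_of_mul_fromCols_eq_one hML))
  have hblocks := transpose_mul_mul_mul_inv_mul_transpose_eq_one hLM hML
    ((isUnit_iff_isUnit_det H).mp hH.isUnit)
  rw [← transpose_transpose (fromCols L₁ L₂), transpose_fromCols, transpose_transpose,
    fromRows_mul_mul_transpose_fromRows, ← fromRows_toRows M,
    fromRows_mul_mul_transpose_fromRows] at hblocks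
  simp only [transpose_transpose] at hblocks
  rw [eq_transpose_toRows₁_of_fromCols_mul_eq_one hLM hL₁X hL₂X, transpose_transpose,
    inv_eq_left_inv (sub_mul_inv_mul_mul_eq_one_of_fromBlocks_mul_eq_one hblocks
      ((isUnit_iff_isUnit_det _).mp hD.isUnit))]
  simp only [Matrix.mul_assoc]

theorem stmt_16 {n p : ℕ} (H : Matrix (Fin n) (Fin n) ℝ)
    (X : Matrix (Fin n) (Fin p) ℝ)
    (L₁ : Matrix (Fin n) (Fin p) ℝ) (L₂ : Matrix (Fin n) (Fin (n - p)) ℝ)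
    (hH : H.PosDef) (hX : X.rank = p)
    (hL : ∃ M : Matrix (Fin p ⊕ Fin (n - p)) (Fin n) ℝ,
      Matrix.fromCols L₁ L₂ * M = 1 ∧ M * Matrix.fromCols L₁ L₂ = 1)
    (hL₁X : L₁ᵀ * X = 1) (hL₂X : L₂ᵀ * X = 0) :
    (Xᵀ * H⁻¹ * X)⁻¹ = L₁ᵀ * H * L₁ - L₁ᵀ * H * L₂ * (L₂ᵀ * H * L₂)⁻¹ * L₂ᵀ * H * L₁ :=
  stmt_16_general H X L₁ L₂ hH hL hL₁X hL₂X
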